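/- arXiv:2209.11225 — 5 statements merged into one kernel-verified Lean document; each statement's English description precedes it below -/
import Mathlib

section
/- The set of points of the form μ·v, where μ > 0 and v lies in the convex hull of the curve {(exp(x), 1, x) : x ∈ ℝ} ⊆ ℝ³, equals the set {(x₁,x₂,x₃) ∈ ℝ³ : x₂ > 0 and x₁ ≥ x₂·exp(x₃/x₂)}. -/
open Real

/-- The curve `{(exp x, 1, x) : x ∈ ℝ} ⊆ ℝ³`. -/
def expCurve : Set (Fin 3 → ℝ) := Set.range fun x : ℝ => ![Real.exp x, 1, x]

/-!
The epigraph slice `{w | w 1 = 1 ∧ exp (w 2) ≤ w 0}` is convex (exp is convex) and contains the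
curve, so it contains its convex hull. Conversely, every point `(exp t * cosh c, 1, t)` of it is
the midpoint of the curve points with parameters `t - c` and `t + c`, and `cosh` attains every
value `≥ 1`. So the hull is exactly the slice, and taking positive multiples of it gives the
perspective of `exp`: dividing by the middle coordinate returns to the slice.
-/

open Set

theorem convexHull_range_subset_epigraph {f : ℝ → ℝ} (hf : ConvexOn ℝ univ f) :
    convexHull ℝ (range fun x : ℝ => ![f x, 1, x]) ⊆ {w | w 1 = 1 ∧ f (w 2) ≤ w 0} := by
  refine convexHull_min ?_ ?_
  · rintro _ ⟨x, rfl⟩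
    simp
  · rintro x ⟨hx1, hx⟩ y ⟨hy1, hy⟩ a b ha hb hab
    simp only [mem_ofPred_eq, Pi.add_apply, Pi.smul_apply, smul_eq_mul, hx1, hy1]
    refine ⟨by simpa using hab, ?_⟩
    calc f (a * x 2 + b * y 2) ≤ a * f (x 2) + b * f (y 2) := hf.2 trivial trivial ha hb hab
      _ ≤ a * x 0 + b * y 0 := by gcongr

theorem exp_mul_cosh_mem_convexHull_expCurve (t c : ℝ) :
    ![exp t * cosh c, 1, t] ∈ convexHull ℝ expCurve := by
  have hmid : ![exp t * cosh c, 1, t] =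
      (1 / 2 : ℝ) • ![exp (t - c), 1, t - c] + (1 / 2 : ℝ) • ![exp (t + c), 1, t + c] := by
    ext i
    fin_cases i <;> simp [cosh_eq, exp_sub, exp_add, exp_neg] <;> ring
  rw [hmid]
  exact convex_convexHull ℝ _ (subset_convexHull ℝ expCurve ⟨t - c, rfl⟩)
    (subset_convexHull ℝ expCurve ⟨t + c, rfl⟩) (by norm_num) (by norm_num) (by norm_num)

theorem convexHull_expCurve :
    convexHull ℝ expCurve = {w | w 1 = 1 ∧ exp (w 2) ≤ w 0} := by
  refine (convexHull_range_subset_epigraph convexOn_exp).antisymm ?_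
  rintro w ⟨hw1, hw⟩
  have hr : 1 ≤ w 0 / exp (w 2) := (one_le_div (exp_pos _)).2 hw
  have hw_eq : w = ![exp (w 2) * cosh (arcosh (w 0 / exp (w 2))), 1, w 2] := by
    rw [cosh_arcosh hr, mul_div_cancel₀ _ (exp_pos _).ne']
    ext i
    fin_cases i <;> simp [hw1]
  rw [hw_eq]
  exact exp_mul_cosh_mem_convexHull_expCurve _ _

theorem exists_pos_smul_of_coord_eq_one_iff {ι : Type*} (i : ι) (P : (ι → ℝ) → Prop)
    (p : ι → ℝ) :
    (∃ μ : ℝ, 0 < μ ∧ ∃ v, (v i = 1 ∧ P v) ∧ p = μ • v) ↔ 0 < p i ∧ P ((p i)⁻¹ • p) := by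
  constructor
  · rintro ⟨μ, hμ, v, ⟨hv1, hv⟩, rfl⟩
    simpa [hv1, hμ, smul_smul, hμ.ne'] using hv
  · rintro ⟨hp, hP⟩
    exact ⟨p i, hp, _, ⟨by simp [hp.ne'], hP⟩, by simp [smul_smul, hp.ne']⟩

/-- The set of positive multiples of points of the convex hull of the curve
`{(exp x, 1, x) : x ∈ ℝ}` equals `{(x₁,x₂,x₃) : x₂ > 0, x₁ ≥ x₂·exp(x₃/x₂)}`. -/
theorem smul_convexHull_expCurve_eq :
    {p : Fin 3 → ℝ | ∃ μ : ℝ, 0 < μ ∧ ∃ v ∈ convexHull ℝ expCurve, p = μ • v} =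
      {x : Fin 3 → ℝ | 0 < x 1 ∧ x 1 * Real.exp (x 2 / x 1) ≤ x 0} := by
  ext p
  simp only [convexHull_expCurve, mem_ofPred_eq]
  rw [exists_pos_smul_of_coord_eq_one_iff 1 (fun v => exp (v 2) ≤ v 0)]
  refine and_congr_right fun hp => ?_
  simp only [Pi.smul_apply, smul_eq_mul, inv_mul_eq_div]
  rw [le_div_iff₀ hp, mul_comm]
end

section
/- The dual cone of the exponential cone K_exp equals the topological closure of the set {(y₁,y₂,y₃) ∈ ℝ³ : y₁ > 0, y₃ < 0, y₁ ≥ −y₃·exp(y₂/y₃ − 1)}. -/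
open Real

/-- The exponential cone
`K_exp = {(x₁,x₂,x₃) : x₂ > 0, x₁ ≥ x₂·exp(x₃/x₂)} ∪ {(x₁,0,x₃) : x₁ ≥ 0, x₃ ≤ 0}`. -/
def Kexp : Set (Fin 3 → ℝ) :=
  {x | 0 < x 1 ∧ x 1 * Real.exp (x 2 / x 1) ≤ x 0} ∪
  {x | x 1 = 0 ∧ 0 ≤ x 0 ∧ x 2 ≤ 0}

/-- The dual cone of `C ⊆ ℝ³` with respect to the standard inner product. -/
def dualCone (C : Set (Fin 3 → ℝ)) : Set (Fin 3 → ℝ) :=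
  {y | ∀ x ∈ C, 0 ≤ y 0 * x 0 + y 1 * x 1 + y 2 * x 2}

/-!
Every point of `Kexp` with `x₂ > 0` is `x₂ (eᵗ, 1, t) + s (1, 0, 0)` with `t = x₃/x₂`, `s ≥ 0`, and the
points with `x₂ = 0` are combinations of `(1, 0, 0)` and `(0, 0, -1)`. So `y` is in the dual cone iff
`y₁ ≥ 0`, `y₃ ≤ 0` and `y₁ eᵗ + y₂ + y₃ t ≥ 0` for all real `t`. For `y₃ < 0` this convex function of
`t` is minimal at `t = 1 - y₂/y₃`, which turns the condition into `y₁ ≥ -y₃ exp (y₂/y₃ - 1)`.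
For `y₃ = 0` it forces `y₂ ≥ 0` (let `t → -∞`), and such `y` are the limits of `y + ε (1, 0, -1)`
as `ε → 0⁺`.
-/

open Filter Topology

lemma isClosed_dualCone (C : Set (Fin 3 → ℝ)) : IsClosed (dualCone C) := by
  simp only [dualCone, Set.ofPred_forall]
  exact isClosed_biInter fun x _ => isClosed_le continuous_const (by fun_prop)

lemma mem_dualCone_Kexp_iff {y : Fin 3 → ℝ} :
    y ∈ dualCone Kexp ↔ 0 ≤ y 0 ∧ y 2 ≤ 0 ∧ ∀ t, 0 ≤ y 0 * exp t + y 1 + y 2 * t := by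
  constructor
  · intro hy
    refine ⟨by simpa using hy ![1, 0, 0] (Or.inr (by simp)),
      by simpa using hy ![0, 0, -1] (Or.inr (by simp)),
      fun t => by simpa [mul_comm] using hy ![exp t, 1, t] (Or.inl (by simp))⟩
  · rintro ⟨hy0, hy2, h⟩ x (⟨hx1, hx0⟩ | ⟨hx1, hx0, hx2⟩)
    · calc 0 ≤ x 1 * (y 0 * exp (x 2 / x 1) + y 1 + y 2 * (x 2 / x 1)) :=
            mul_nonneg hx1.le (h _)
        _ = y 0 * (x 1 * exp (x 2 / x 1)) + y 1 * x 1 + y 2 * x 2 := by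
            field_simp [hx1.ne']
        _ ≤ y 0 * x 0 + y 1 * x 1 + y 2 * x 2 := by gcongr
    · rw [hx1]
      linarith [mul_nonneg hy0 hx0, mul_nonneg_of_nonpos_of_nonpos hy2 hx2]

lemma neg_mul_exp_le_iff_forall {a b c : ℝ} (hc : c < 0) :
    -c * exp (b / c - 1) ≤ a ↔ ∀ t, 0 ≤ a * exp t + b + c * t := by
  constructor
  · intro h t
    have hexp : b / c + t ≤ exp (b / c - 1 + t) := by linarith [add_one_le_exp (b / c - 1 + t)]
    calc 0 = -c * (b / c + t) + b + c * t := by field_simp [hc.ne]; ring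
      _ ≤ -c * exp (b / c - 1 + t) + b + c * t := by gcongr; linarith
      _ = -c * exp (b / c - 1) * exp t + b + c * t := by rw [exp_add, mul_assoc]
      _ ≤ a * exp t + b + c * t := by gcongr
  · intro h
    have hmin : -c ≤ a * exp (1 - b / c) := by
      have : c * (1 - b / c) = c - b := by field_simp [hc.ne]
      linarith [h (1 - b / c)]
    calc -c * exp (b / c - 1) ≤ a * exp (1 - b / c) * exp (b / c - 1) := by gcongr
      _ = a := by rw [mul_assoc, ← exp_add]; simp

lemma nonneg_of_forall_nonneg_mul_exp_add {a b : ℝ} (h : ∀ t, 0 ≤ a * exp t + b) : 0 ≤ b := by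
  have hlim : Tendsto (fun t => a * exp t + b) atBot (𝓝 b) := by
    simpa using (tendsto_exp_atBot.const_mul a).add_const b
  exact ge_of_tendsto' hlim h

def expDualSet : Set (Fin 3 → ℝ) :=
  {y | 0 < y 0 ∧ y 2 < 0 ∧ -(y 2) * exp (y 1 / y 2 - 1) ≤ y 0}

lemma mem_expDualSet_iff {y : Fin 3 → ℝ} (hy2 : y 2 < 0) :
    y ∈ expDualSet ↔ ∀ t, 0 ≤ y 0 * exp t + y 1 + y 2 * t := by
  rw [← neg_mul_exp_le_iff_forall hy2]
  refine ⟨fun hy => hy.2.2, fun h => ⟨?_, hy2, h⟩⟩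
  exact (mul_pos (neg_pos.2 hy2) (exp_pos _)).trans_le h

lemma expDualSet_subset_dualCone_Kexp : expDualSet ⊆ dualCone Kexp := fun _ hy =>
  mem_dualCone_Kexp_iff.2 ⟨hy.1.le, hy.2.1.le, (mem_expDualSet_iff hy.2.1).1 hy⟩

lemma mem_closure_expDualSet {y : Fin 3 → ℝ} (hy0 : 0 ≤ y 0) (hy1 : 0 ≤ y 1) (hy2 : y 2 = 0) :
    y ∈ closure expDualSet := by
  have hlim : Tendsto (fun ε : ℝ => y + ε • ![1, 0, -1]) (𝓝[>] 0) (𝓝 y) :=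
    (Continuous.tendsto' (by fun_prop) 0 y (by simp)).mono_left nhdsWithin_le_nhds
  refine mem_closure_of_tendsto hlim (eventually_nhdsWithin_of_forall fun ε (hε : 0 < ε) => ?_)
  have hexp : exp (y 1 / -ε - 1) ≤ 1 := by
    rw [exp_le_one_iff]
    linarith [div_nonpos_of_nonneg_of_nonpos hy1 (neg_nonpos.2 hε.le)]
  refine ⟨by simpa using add_pos_of_nonneg_of_pos hy0 hε, by simp [hy2, hε], ?_⟩
  simpa [hy2] using (mul_le_of_le_one_right hε.le hexp).trans (le_add_of_nonneg_left hy0)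

/-- The dual cone of the exponential cone is the closure of
`{(y₁,y₂,y₃) : y₁ > 0, y₃ < 0, y₁ ≥ −y₃·exp(y₂/y₃ − 1)}`. -/
theorem dualCone_Kexp :
    dualCone Kexp =
      closure {y : Fin 3 → ℝ | 0 < y 0 ∧ y 2 < 0 ∧ -(y 2) * Real.exp (y 1 / y 2 - 1) ≤ y 0} := by
  change dualCone Kexp = closure expDualSet
  refine (closure_minimal expDualSet_subset_dualCone_Kexp (isClosed_dualCone _)).antisymm'
    fun y hy => ?_
  obtain ⟨hy0, hy2, h⟩ := mem_dualCone_Kexp_iff.1 hy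
  rcases hy2.lt_or_eq with hy2 | hy2
  · exact subset_closure ((mem_expDualSet_iff hy2).2 h)
  · have hy1 : 0 ≤ y 1 := nonneg_of_forall_nonneg_mul_exp_add fun t => by simpa [hy2] using h t
    exact mem_closure_expDualSet hy0 hy1 hy2
end

section
/- For every real a > 0, the linear map on ℝ³ given by the matrix D(a) = [[a,0,0],[0,1,0],[0,ln a,1]] (i.e., (x₁,x₂,x₃) ↦ (a·x₁, x₂, x₂·ln a + x₃)) maps the exponential cone K_exp into itself. -/
open Real

/-- The linear map on `ℝ³` given by the matrix `D(a) = [[a,0,0],[0,1,0],[0,ln a,1]]`: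
`(x₁,x₂,x₃) ↦ (a·x₁, x₂, x₂·ln a + x₃)`. -/
noncomputable def Dmap (a : ℝ) (x : Fin 3 → ℝ) : Fin 3 → ℝ :=
  ![a * x 0, x 1, x 1 * Real.log a + x 2]

/-- For every `a > 0`, the map `D(a)` preserves the exponential cone. -/
theorem Dmap_mapsTo_Kexp (a : ℝ) (ha : 0 < a) : Set.MapsTo (Dmap a) Kexp Kexp := by
  intro x hx
  rcases hx with ⟨h1, h2⟩ | ⟨h1, h2, h3⟩
  · left
    refine ⟨by simpa [Dmap] using h1, ?_⟩
    simp only [Dmap, Matrix.cons_val_zero, Matrix.cons_val_one, Matrix.head_cons,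
      Matrix.cons_val_two, Matrix.tail_cons]
    have hne : x 1 ≠ 0 := ne_of_gt h1
    have : (x 1 * Real.log a + x 2) / x 1 = Real.log a + x 2 / x 1 := by
      field_simp
    rw [this, Real.exp_add, Real.exp_log ha]
    calc x 1 * (a * Real.exp (x 2 / x 1)) = a * (x 1 * Real.exp (x 2 / x 1)) := by ring
      _ ≤ a * x 0 := by nlinarith
  · right
    refine ⟨by simpa [Dmap] using h1, ?_, ?_⟩
    · simp only [Dmap, Matrix.cons_val_zero]
      positivity
    · simp [Dmap, h1, h3]
end

section
/- Let a and b be real numbers with a > 1 > b > 0 such that (ln a)/(ln b) is irrational. Then the set {s·ln a + t·ln b : s, t ∈ ℕ} is dense in ℝ (equivalently, {a^s · b^t : s, t ∈ ℕ} is dense in the positive reals). -/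
set_option maxHeartbeats 1000000

open Real

private lemma abs_sub_lt_one_of_floor_eq {x y : ℝ} (h : ⌊x⌋ = ⌊y⌋) : |x - y| < 1 := by
  have hx1 := Int.lt_floor_add_one x
  have hx2 := Int.floor_le x
  have hy1 := Int.lt_floor_add_one y
  have hy2 := Int.floor_le y
  rw [h] at hx1
  rw [h] at hx2
  rw [abs_sub_lt_iff]
  constructor <;> linarith

private lemma exists_small_combo (α c : ℝ) (hα : 0 < α) (hc : 0 < c)
    (hirr : Irrational (α / c)) {ε : ℝ} (hε : 0 < ε) :
    ∃ u v : ℕ, 0 < u ∧ (u : ℝ) * α - (v : ℝ) * c ≠ 0 ∧ |(u : ℝ) * α - (v : ℝ) * c| < ε := by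
  set θ := α / c with hθdef
  have hθ : 0 < θ := div_pos hα hc
  set M : ℕ := ⌈c / ε⌉₊ + 1 with hM
  have hMpos : (0:ℝ) < M := by positivity
  have hcM : c / (M : ℝ) < ε := by
    rw [div_lt_iff₀ hMpos]
    have h1 : c / ε < M := lt_of_le_of_lt (Nat.le_ceil _)
      (by exact_mod_cast Nat.lt_succ_self _)
    rw [div_lt_iff₀ hε] at h1
    linarith
  set f : ℕ → ℤ := fun s => ⌊Int.fract ((s:ℝ) * θ) * M⌋ with hf
  have hf0 : ∀ s, 0 ≤ f s := fun s =>
    Int.floor_nonneg.2 (mul_nonneg (Int.fract_nonneg _) hMpos.le)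
  have hfM : ∀ s, f s < (M:ℤ) := by
    intro s
    apply Int.floor_lt.mpr
    have h1 : Int.fract ((s:ℝ)*θ) < 1 := Int.fract_lt_one _
    have h0 : 0 ≤ Int.fract ((s:ℝ)*θ) := Int.fract_nonneg _
    push_cast
    nlinarith
  let g : Fin (M+1) → Fin M := fun s => ⟨(f s).toNat, by
    have := hf0 (s:ℕ); have := hfM (s:ℕ); omega⟩
  obtain ⟨i, j, hij, hgij⟩ := Fintype.exists_ne_map_eq_of_card_lt g (by simp)
  have hfij : f i = f j := by
    have : (f (i:ℕ)).toNat = (f (j:ℕ)).toNat := congrArg Fin.val hgij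
    have := hf0 (i:ℕ); have := hf0 (j:ℕ); omega
  obtain ⟨p, q, hpq, hfpq⟩ : ∃ p q : ℕ, p < q ∧ f p = f q := by
    rcases Ne.lt_or_gt (show (i:ℕ) ≠ (j:ℕ) from fun h => hij (Fin.ext h)) with h | h
    · exact ⟨i, j, h, hfij⟩
    · exact ⟨j, i, h, hfij.symm⟩
  have hclose : |Int.fract ((q:ℝ)*θ) - Int.fract ((p:ℝ)*θ)| < 1 / M := by
    have h1 : |Int.fract ((q:ℝ)*θ) * M - Int.fract ((p:ℝ)*θ) * M| < 1 :=
      abs_sub_lt_one_of_floor_eq hfpq.symm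
    rw [lt_div_iff₀ hMpos]
    calc |Int.fract ((q:ℝ)*θ) - Int.fract ((p:ℝ)*θ)| * M
        = |Int.fract ((q:ℝ)*θ) * M - Int.fract ((p:ℝ)*θ) * M| := by
          rw [← sub_mul, abs_mul, abs_of_pos hMpos]
      _ < 1 := h1
  set u : ℕ := q - p with hu
  have hu0 : 0 < u := by omega
  have hucast : (u:ℝ) = (q:ℝ) - p := by
    rw [hu]; push_cast [Nat.cast_sub hpq.le]; ring
  set k : ℤ := ⌊(q:ℝ)*θ⌋ - ⌊(p:ℝ)*θ⌋ with hk
  have hk0 : 0 ≤ k := by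
    rw [hk]
    have : (p:ℝ)*θ ≤ (q:ℝ)*θ := by
      have : (p:ℝ) ≤ q := by exact_mod_cast hpq.le
      nlinarith
    have := Int.floor_le_floor this
    omega
  set v : ℕ := k.toNat with hv
  have hvcast : (v:ℝ) = (k:ℝ) := by
    rw [hv]; exact_mod_cast Int.toNat_of_nonneg hk0
  have hcθ : c * θ = α := by
    rw [hθdef]; field_simp
  have hkey : (u:ℝ) * α - (v:ℝ) * c = c * (Int.fract ((q:ℝ)*θ) - Int.fract ((p:ℝ)*θ)) := by
    rw [hucast, hvcast, Int.fract, Int.fract, hk]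
    push_cast
    rw [← hcθ]
    ring
  refine ⟨u, v, hu0, ?_, ?_⟩
  · rw [hkey]
    intro h
    have hfr : Int.fract ((q:ℝ)*θ) = Int.fract ((p:ℝ)*θ) := by
      rcases mul_eq_zero.mp h with h | h
      · exact absurd h hc.ne'
      · linarith
    have heq : (u:ℝ) * θ = (k:ℝ) := by
      rw [Int.fract, Int.fract] at hfr
      rw [hucast, hk]
      push_cast
      linarith
    apply hirr
    refine ⟨(k : ℚ) / (u : ℚ), ?_⟩
    push_cast
    rw [div_eq_iff (by exact_mod_cast hu0.ne' : (u:ℝ) ≠ 0)]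
    linarith [heq]
  · rw [hkey, abs_mul, abs_of_pos hc]
    calc c * |Int.fract ((q:ℝ)*θ) - Int.fract ((p:ℝ)*θ)| < c * (1/M) := by
          exact mul_lt_mul_of_pos_left hclose hc
      _ = c / M := by ring
      _ < ε := hcM

/-- For `a > 1 > b > 0` with `(ln a)/(ln b)` irrational, the set
`{s·ln a + t·ln b : s, t ∈ ℕ}` is dense in `ℝ`. -/
theorem dense_natCombos_log (a b : ℝ) (ha : 1 < a) (hb1 : b < 1) (hb0 : 0 < b)
    (hirr : Irrational (Real.log a / Real.log b)) :
    Dense {x : ℝ | ∃ s t : ℕ, x = (s : ℝ) * Real.log a + (t : ℝ) * Real.log b} := by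
  set α := Real.log a with hαdef
  set β := Real.log b with hβdef
  have hα : 0 < α := Real.log_pos ha
  have hβ : β < 0 := Real.log_neg hb0 hb1
  set c : ℝ := -β with hcdef
  have hc : 0 < c := by linarith
  have hirr' : Irrational (α / c) := by
    have h : α / c = -(α / β) := by
      rw [hcdef, div_neg]
    rw [h]
    exact hirr.neg
  rw [Metric.dense_iff]
  intro x ε hε
  obtain ⟨u, v, hu0, hd0, hdlt⟩ := exists_small_combo α c hα hc hirr' hε
  set d : ℝ := (u:ℝ) * α - (v:ℝ) * c with hd
  rcases hd0.lt_or_gt with hneg | hpos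
  · -- d < 0 : step down from k*α
    set k : ℕ := ⌈|x| / α⌉₊ with hk
    have hkx : x ≤ (k:ℝ) * α := by
      have h1 : |x| / α ≤ k := Nat.le_ceil _
      rw [div_le_iff₀ hα] at h1
      calc x ≤ |x| := le_abs_self x
        _ ≤ k * α := h1
    set m : ℝ := ((k:ℝ) * α - x) / (-d) with hm
    have hm0 : 0 ≤ m := div_nonneg (by linarith) (by linarith)
    set n : ℕ := (⌊m⌋).toNat with hn
    have hncast : (n:ℝ) = (⌊m⌋ : ℝ) := by
      rw [hn]; exact_mod_cast Int.toNat_of_nonneg (Int.floor_nonneg.2 hm0)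
    have hnm1 : (n:ℝ) ≤ m := by rw [hncast]; exact Int.floor_le m
    have hnm2 : m < (n:ℝ) + 1 := by rw [hncast]; exact_mod_cast Int.lt_floor_add_one m
    refine ⟨((k + n*u : ℕ):ℝ) * α + ((n*v : ℕ):ℝ) * β, ?_, ⟨k + n*u, n*v, rfl⟩⟩
    have hy : ((k + n*u : ℕ):ℝ) * α + ((n*v : ℕ):ℝ) * β = (k:ℝ)*α + (n:ℝ)*d := by
      rw [hd, hcdef]; push_cast; ring
    rw [Metric.mem_ball, Real.dist_eq, hy]
    have hmd : m * (-d) = (k:ℝ)*α - x := by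
      rw [hm]; field_simp
    have habs1 : -d ≤ |d| := neg_le_abs d
    have habs2 : d ≤ |d| := le_abs_self d
    rw [abs_lt]
    constructor
    · -- -ε < kα + nd - x
      have : (n:ℝ) * (-d) ≤ m * (-d) := by nlinarith
      nlinarith
    · -- kα + nd - x < ε
      have : m * (-d) < ((n:ℝ)+1) * (-d) := by nlinarith
      nlinarith
  · -- d > 0 : step up from k*β
    set k : ℕ := ⌈|x| / c⌉₊ with hk
    have hkx : (k:ℝ) * β ≤ x := by
      have h1 : |x| / c ≤ k := Nat.le_ceil _
      rw [div_le_iff₀ hc] at h1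
      have h2 : -x ≤ |x| := neg_le_abs x
      have h3 : (k:ℝ) * β = -((k:ℝ) * c) := by rw [hcdef]; ring
      linarith
    set m : ℝ := (x - (k:ℝ)*β) / d with hm
    have hm0 : 0 ≤ m := div_nonneg (by linarith) (by linarith)
    set n : ℕ := (⌊m⌋).toNat with hn
    have hncast : (n:ℝ) = (⌊m⌋ : ℝ) := by
      rw [hn]; exact_mod_cast Int.toNat_of_nonneg (Int.floor_nonneg.2 hm0)
    have hnm1 : (n:ℝ) ≤ m := by rw [hncast]; exact Int.floor_le m
    have hnm2 : m < (n:ℝ) + 1 := by rw [hncast]; exact_mod_cast Int.lt_floor_add_one m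
    refine ⟨((n*u : ℕ):ℝ) * α + ((k + n*v : ℕ):ℝ) * β, ?_, ⟨n*u, k + n*v, rfl⟩⟩
    have hy : ((n*u : ℕ):ℝ) * α + ((k + n*v : ℕ):ℝ) * β = (k:ℝ)*β + (n:ℝ)*d := by
      rw [hd, hcdef]; push_cast; ring
    rw [Metric.mem_ball, Real.dist_eq, hy]
    have hmd : m * d = x - (k:ℝ)*β := by
      rw [hm]; field_simp
    have habs1 : -d ≤ |d| := neg_le_abs d
    have habs2 : d ≤ |d| := le_abs_self d
    rw [abs_lt]
    constructor
    · have : m * d < ((n:ℝ)+1) * d := by nlinarith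
      nlinarith
    · have : (n:ℝ) * d ≤ m * d := by nlinarith
      nlinarith
end

section
/- Let 0 < λ < 1 and α ∈ ℝ with cos α < 1, and let r ∈ ℝ be defined by tanh(2r) = (1−λ)/√(1+λ²−2λcos α) (the right-hand side lies in (0,1) under these hypotheses). Let X = [[0,1],[1,0]] and Z = [[1,0],[0,−1]] be complex 2×2 matrices, and define M = λ·exp(rX)·exp(−i(α/2)Z)·exp(−2rX)·exp(i(α/2)Z)·exp(rX). Then M is Hermitian with trace(M) = 1 + λ² and det(M) = λ² (so its eigenvalues are 1 and λ²), and M ≤ I in the positive semidefinite order (i.e., I − M is positive semidefinite). -/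
/-! Conjugating `exp(-2rX)` by the diagonal unitary `exp(iαZ/2)` only twists the phases of its
off-diagonal entries, so by cyclicity of the trace
`tr M = 2λ(cosh² 2r - sinh² 2r cos α) = 2λ + 2λ(1 - cos α) sinh² 2r`, and the choice of `r` makes
the last term `(1 - λ)²`. `M` is a palindromic product of exponentials of Hermitian and
skew-Hermitian multiples of traceless matrices, hence Hermitian of determinant `λ²`. By
Cayley–Hamilton `(1 - M)² = (1 - λ²)(1 - M)`, which exhibits `1 - M` as a positive multiple of
`(1 - M)ᴴ(1 - M)`. -/

open Matrix ComplexOrder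

/-- The Pauli matrix `X = [[0,1],[1,0]]`. -/
def Xm : Matrix (Fin 2) (Fin 2) ℂ := !![0, 1; 1, 0]

/-- The Pauli matrix `Z = [[1,0],[0,−1]]`. -/
def Zm : Matrix (Fin 2) (Fin 2) ℂ := !![1, 0; 0, -1]

/-- `M = λ·exp(rX)·exp(−i(α/2)Z)·exp(−2rX)·exp(i(α/2)Z)·exp(rX)`. -/
noncomputable def Mmat (lam r α : ℝ) : Matrix (Fin 2) (Fin 2) ℂ :=
  (lam : ℂ) •
    (NormedSpace.exp ((r : ℂ) • Xm) * NormedSpace.exp ((-(Complex.I * (α / 2))) • Zm) *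
      NormedSpace.exp ((-(2 * r : ℂ)) • Xm) * NormedSpace.exp ((Complex.I * (α / 2)) • Zm) *
      NormedSpace.exp ((r : ℂ) • Xm))

theorem Real.sinh_sq_mul_sub_eq_of_tanh_eq_div_sqrt {u a D : ℝ} (hD : 0 < D)
    (h : Real.tanh u = a / √D) : Real.sinh u ^ 2 * (D - a ^ 2) = a ^ 2 := by
  rw [Real.tanh_eq_sinh_div_cosh, div_eq_div_iff (Real.cosh_pos u).ne' (Real.sqrt_pos.mpr hD).ne']
    at h
  have h2 := congrArg (· ^ 2) h
  simp only [mul_pow, Real.sq_sqrt hD.le] at h2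
  linear_combination h2 + a ^ 2 * Real.cosh_sq_sub_sinh_sq u

namespace Matrix

variable {𝕜 : Type*} [RCLike 𝕜]

theorem mul_self_fin_two {R : Type*} [CommRing R] (A : Matrix (Fin 2) (Fin 2) R) :
    A * A = A.trace • A - A.det • 1 := by
  ext i j
  fin_cases i <;> fin_cases j <;>
    simp [trace_fin_two, det_fin_two, mul_apply, Fin.sum_univ_two] <;> ring

theorem PosSemidef.of_mul_self_eq_smul {n : Type*} [Fintype n] {N : Matrix n n 𝕜}
    (hN : N.IsHermitian) {c : ℝ} (hc : 0 < c) (h : N * N = c • N) : N.PosSemidef := by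
  have hN' : N = c⁻¹ • (Nᴴ * N) := by
    rw [hN.eq, h, smul_smul, inv_mul_cancel₀ hc.ne', one_smul]
  rw [hN']
  exact (posSemidef_conjTranspose_mul_self N).smul (inv_nonneg.mpr hc.le)

theorem posSemidef_one_sub_of_trace_eq_of_det_eq {M : Matrix (Fin 2) (Fin 2) 𝕜}
    (hM : M.IsHermitian) {μ : ℝ} (hμ : μ < 1) (htr : M.trace = 1 + μ) (hdet : M.det = μ) :
    (1 - M).PosSemidef := by
  refine PosSemidef.of_mul_self_eq_smul (isHermitian_one.sub hM) (sub_pos.mpr hμ) ?_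
  have hM2 := mul_self_fin_two M
  rw [htr, hdet] at hM2
  calc (1 - M) * (1 - M) = 1 - 2 • M + M * M := by noncomm_ring
    _ = (1 - μ) • (1 - M) := by
      rw [hM2, RCLike.real_smul_eq_coe_smul (K := 𝕜)]
      push_cast
      module

theorem conjTranspose_exp_smul {n : Type*} [Fintype n] [DecidableEq n] {A : Matrix n n 𝕜}
    (hA : A.IsHermitian) (s : 𝕜) :
    (NormedSpace.exp (s • A))ᴴ = NormedSpace.exp (star s • A) := by
  rw [← exp_conjTranspose, conjTranspose_smul, hA.eq]

end Matrix

section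

open NormedSpace

theorem exp_smul_Zm (t : ℂ) :
    exp (t • Zm) = !![Complex.exp t, 0; 0, Complex.exp (-t)] := by
  have h : t • Zm = Matrix.diagonal ![t, -t] := by
    ext i j; fin_cases i <;> fin_cases j <;> simp [Zm]
  rw [h, Matrix.exp_diagonal]
  ext i j
  fin_cases i <;> fin_cases j <;> simp [Pi.exp_def, ← Complex.exp_eq_exp_ℂ]

theorem exp_smul_Xm (t : ℂ) :
    exp (t • Xm) = !![Complex.cosh t, Complex.sinh t; Complex.sinh t, Complex.cosh t] := by
  set P : Matrix (Fin 2) (Fin 2) ℂ := !![1, 1; 1, -1]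
  have hPinv : P⁻¹ = (2⁻¹ : ℂ) • P := by
    apply Matrix.inv_eq_right_inv
    ext i j; fin_cases i <;> fin_cases j <;>
      simp [P, Matrix.mul_apply, Fin.sum_univ_two] <;> norm_num
  have hP : IsUnit P := by
    rw [Matrix.isUnit_iff_isUnit_det]
    simp [P, Matrix.det_fin_two_of]
    norm_num
  have hconj : t • Xm = P * (t • Zm) * P⁻¹ := by
    rw [hPinv]
    ext i j; fin_cases i <;> fin_cases j <;>
      simp [P, Xm, Zm, Matrix.mul_apply, Fin.sum_univ_two] <;> ring
  rw [hconj, Matrix.exp_conj P _ hP, exp_smul_Zm, hPinv]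
  ext i j
  fin_cases i <;> fin_cases j <;>
    simp [P, Matrix.mul_apply, Fin.sum_univ_two, Complex.cosh, Complex.sinh] <;> ring

theorem det_exp_smul_Zm (t : ℂ) : (exp (t • Zm)).det = 1 := by
  simp [exp_smul_Zm, Matrix.det_fin_two_of, ← Complex.exp_add]

theorem det_exp_smul_Xm (t : ℂ) : (exp (t • Xm)).det = 1 := by
  simp [exp_smul_Xm, Matrix.det_fin_two_of, ← sq, Complex.cosh_sq_sub_sinh_sq]

theorem trace_exp_smul_Xm_mul_conj_exp_neg_smul_Xm (t φ : ℂ) :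
    (exp (t • Xm) * exp ((-(Complex.I * (φ / 2))) • Zm) * exp ((-t) • Xm) *
      exp ((Complex.I * (φ / 2)) • Zm)).trace =
      2 * (Complex.cosh t ^ 2 - Complex.sinh t ^ 2 * Complex.cos φ) := by
  set θ := Complex.I * (φ / 2)
  have hexp : Complex.exp θ * Complex.exp (-θ) = 1 := by
    rw [← Complex.exp_add, add_neg_cancel, Complex.exp_zero]
  rw [Complex.cos, show φ * Complex.I = θ + θ by ring, show -φ * Complex.I = -θ + -θ by ring,
    Complex.exp_add, Complex.exp_add, exp_smul_Xm, exp_smul_Zm, exp_smul_Xm, exp_smul_Zm]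
  simp [Matrix.trace_fin_two]
  linear_combination 2 * Complex.cosh t ^ 2 * hexp

theorem isHermitian_Mmat (lam r α : ℝ) : (Mmat lam r α).IsHermitian := by
  have hX : Xm.IsHermitian := by ext i j; fin_cases i <;> fin_cases j <;> simp [Xm]
  have hZ : Zm.IsHermitian := by ext i j; fin_cases i <;> fin_cases j <;> simp [Zm]
  simp only [IsHermitian, Mmat, conjTranspose_smul, conjTranspose_mul, conjTranspose_exp_smul hX,
    conjTranspose_exp_smul hZ, Complex.star_def, map_neg, map_mul, map_ofNat, map_div₀,
    Complex.conj_ofReal, Complex.conj_I, neg_neg, neg_mul, mul_assoc]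

theorem det_Mmat (lam r α : ℝ) : (Mmat lam r α).det = (lam : ℂ) ^ 2 := by
  simp only [Mmat, det_smul, det_mul, det_exp_smul_Xm, det_exp_smul_Zm, Fintype.card_fin, mul_one]

theorem trace_Mmat (lam r α : ℝ) :
    (Mmat lam r α).trace =
      ((2 * lam * (1 + Real.sinh (2 * r) ^ 2 * (1 - Real.cos α)) : ℝ) : ℂ) := by
  have hsq : exp ((r : ℂ) • Xm) * exp ((r : ℂ) • Xm) = exp ((2 * r : ℂ) • Xm) := by
    rw [← Matrix.exp_add_of_commute _ _ (Commute.refl _), ← add_smul, two_mul]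
  rw [Mmat, trace_smul, trace_mul_comm, ← mul_assoc, ← mul_assoc, ← mul_assoc, hsq,
    trace_exp_smul_Xm_mul_conj_exp_neg_smul_Xm]
  push_cast
  linear_combination (2 * lam : ℂ) * Complex.cosh_sq_sub_sinh_sq (2 * r : ℂ)

end

/-- For `0 < λ < 1`, `cos α < 1`, and `r` with `tanh(2r) = (1−λ)/√(1+λ²−2λcos α)`:
`M` is Hermitian, `trace M = 1 + λ²`, `det M = λ²`, and `I − M` is positive semidefinite. -/
theorem Mmat_hermitian_trace_det_le_one (lam r α : ℝ)
    (h0 : 0 < lam) (h1 : lam < 1) (hcos : Real.cos α < 1)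
    (hr : Real.tanh (2 * r) = (1 - lam) / Real.sqrt (1 + lam ^ 2 - 2 * lam * Real.cos α)) :
    (Mmat lam r α).IsHermitian ∧
    (Mmat lam r α).trace = 1 + (lam : ℂ) ^ 2 ∧
    (Mmat lam r α).det = (lam : ℂ) ^ 2 ∧
    (1 - Mmat lam r α).PosSemidef := by
  have hD : 0 < 1 + lam ^ 2 - 2 * lam * Real.cos α := by nlinarith
  have hsinh := Real.sinh_sq_mul_sub_eq_of_tanh_eq_div_sqrt hD hr
  have htr : (Mmat lam r α).trace = 1 + (lam : ℂ) ^ 2 := by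
    rw [trace_Mmat]
    norm_cast
    linear_combination hsinh
  have hlam : lam ^ 2 < 1 := by nlinarith
  refine ⟨isHermitian_Mmat lam r α, htr, det_Mmat lam r α, ?_⟩
  exact posSemidef_one_sub_of_trace_eq_of_det_eq (isHermitian_Mmat lam r α) hlam
    (by simpa using htr) (by simpa using det_Mmat lam r α)
end
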